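/- Any critical point x of φ_RS(·;μ,a) satisfies either x = 0 or q(x,μ,a) = 1 − 1/(μa). In particular, dφ_RS/dx = −μx + μ²ax(1 − q(x,μ,a)). -/

import Mathlib

open MeasureTheory ProbabilityTheory

noncomputable section

def rsRHS (μ a x q : ℝ) : ℝ :=
  ∫ p : ℝ × ℝ, Real.tanh (p.1 * Real.sqrt (μ * q) + μ * p.2 * x) ^ 2
    ∂((gaussianReal 0 1).prod (gaussianReal 0 a.toNNReal))

def phiRS (μ a : ℝ) (q : ℝ → ℝ) (x : ℝ) : ℝ :=
  -μ * x ^ 2 / 2 + μ * (1 - q x) ^ 2 / 4 +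
    ∫ p : ℝ × ℝ, Real.log (Real.cosh (p.1 * Real.sqrt (μ * q x) + μ * p.2 * x))
      ∂((gaussianReal 0 1).prod (gaussianReal 0 a.toNNReal))

/-!
Write `φ_RS(x) = -μx²/2 + μ(1 - q)²/4 + H(√(μq), μx)` with `H(u, s) = 𝔼 log cosh (zu + ξs)`,
`z ∼ N(0, 1)`, `ξ ∼ N(0, a)`. Differentiating under the integral and integrating by parts against
each Gaussian (`𝔼[Z f(Z)] = Var Z · 𝔼 f'(Z)`) gives `∇H(u, s) = (u, as) · (1 - 𝔼 tanh² (zu + ξs))`,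
and `𝔼 tanh² = q` by the consistency equation. Along `x ↦ (√(μq), μx)` the `q'`-contribution of
`H`, namely `μq'(1 - q)/2`, cancels the derivative of `μ(1 - q)²/4`; what is left is
`-μx + μ²ax(1 - q)`.
-/

open Real
open scoped NNReal

namespace Real

lemma hasDerivAt_tanh (x : ℝ) : HasDerivAt tanh (1 - tanh x ^ 2) x := by
  have h := (hasDerivAt_sinh x).div (hasDerivAt_cosh x) (cosh_pos x).ne'
  rw [show tanh = sinh / cosh from funext tanh_eq_sinh_div_cosh]
  refine h.congr_deriv ?_
  simp only [Pi.div_apply]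
  field_simp

@[fun_prop]
lemma continuous_tanh : Continuous tanh :=
  continuous_iff_continuousAt.2 fun x => (hasDerivAt_tanh x).continuousAt

lemma abs_one_sub_tanh_sq_le_one (x : ℝ) : |1 - tanh x ^ 2| ≤ 1 := by
  have := tanh_sq_lt_one x
  rw [abs_le]; constructor <;> nlinarith [sq_nonneg (tanh x)]

lemma hasDerivAt_log_cosh (x : ℝ) : HasDerivAt (fun t => log (cosh t)) (tanh x) x := by
  simpa [← tanh_eq_sinh_div_cosh] using (hasDerivAt_cosh x).log (cosh_pos x).ne'

lemma abs_log_cosh_le_abs (x : ℝ) : |log (cosh x)| ≤ |x| := by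
  rw [abs_of_nonneg (log_nonneg (one_le_cosh x)), log_le_iff_le_exp (cosh_pos x),
    ← cosh_abs, cosh_eq]
  linarith [exp_le_exp.2 (neg_le_self (abs_nonneg x))]

end Real

theorem hasFDerivAt_integral_log_cosh {α E : Type*} [MeasurableSpace α] [NormedAddCommGroup E]
    [NormedSpace ℝ E] {P : Measure α} {ℓ : α → E →L[ℝ] ℝ} (hℓ : Integrable ℓ P) (w₀ : E) :
    HasFDerivAt (fun w => ∫ p, log (cosh (ℓ p w)) ∂P) (∫ p, tanh (ℓ p w₀) • ℓ p ∂P) w₀ := by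
  have hmeas : ∀ w, AEStronglyMeasurable (fun p => ℓ p w) P := fun w =>
    (ContinuousLinearMap.apply ℝ ℝ w).continuous.comp_aestronglyMeasurable hℓ.1
  have hlog_cosh : Continuous fun t => log (cosh t) := continuous_cosh.log fun t => (cosh_pos t).ne'
  refine hasFDerivAt_integral_of_dominated_of_fderiv_le (F' := fun w p => tanh (ℓ p w) • ℓ p)
    (bound := fun p => ‖ℓ p‖) Filter.univ_mem (.of_forall fun w => ?_) ?_ ?_ ?_ hℓ.norm ?_
  · exact hlog_cosh.comp_aestronglyMeasurable (hmeas w)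
  · refine (hℓ.norm.mul_const ‖w₀‖).mono' (hlog_cosh.comp_aestronglyMeasurable (hmeas w₀))
      (ae_of_all _ fun p => ?_)
    exact (abs_log_cosh_le_abs _).trans ((ℓ p).le_opNorm w₀)
  · exact (continuous_tanh.comp_aestronglyMeasurable (hmeas w₀)).smul hℓ.1
  · refine ae_of_all _ fun p w _ => ?_
    rw [norm_smul]
    exact mul_le_of_le_one_left (norm_nonneg _) (abs_tanh_lt_one _).le
  · exact ae_of_all _ fun p w _ =>
      (hasDerivAt_log_cosh (ℓ p w)).comp_hasFDerivAt w (ℓ p).hasFDerivAt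

namespace ProbabilityTheory

lemma integrable_id_gaussianReal (m : ℝ) (v : ℝ≥0) : Integrable id (gaussianReal m v) :=
  (memLp_id_gaussianReal 1).integrable le_rfl

lemma integrable_gaussianReal_iff {m : ℝ} {v : ℝ≥0} (hv : v ≠ 0) {f : ℝ → ℝ} :
    Integrable f (gaussianReal m v) ↔ Integrable (fun x => gaussianPDFReal m v x * f x) := by
  rw [gaussianReal_of_var_ne_zero _ hv, integrable_withDensity_iff_integrable_smul'
    (measurable_gaussianPDF _ _) (ae_of_all _ fun _ => gaussianPDF_lt_top)]
  simp [toReal_gaussianPDF]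

lemma hasDerivAt_gaussianPDFReal (m : ℝ) (v : ℝ≥0) (x : ℝ) :
    HasDerivAt (gaussianPDFReal m v) (-((x - m) / v) * gaussianPDFReal m v x) x := by
  have h : HasDerivAt (fun y => -(y - m) ^ 2 / (2 * v)) (-((x - m) / v)) x := by
    refine ((((hasDerivAt_id x).sub_const m).pow 2).neg.div_const (2 * (v : ℝ))).congr_deriv ?_
    simp only [id]; ring
  rw [gaussianPDFReal_def]
  exact (h.exp.const_mul _).congr_deriv (by ring)

theorem integral_sub_mul_eq_mul_integral_deriv_gaussianReal (m : ℝ) (v : ℝ≥0) {f f' : ℝ → ℝ}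
    (hf : ∀ x, HasDerivAt f (f' x) x) {C : ℝ} (hfC : ∀ x, |f x| ≤ C)
    (hf' : Integrable f' (gaussianReal m v)) :
    ∫ x, (x - m) * f x ∂gaussianReal m v = v * ∫ x, f' x ∂gaussianReal m v := by
  rcases eq_or_ne v 0 with rfl | hv
  · simp [gaussianReal_zero_var]
  have hf_meas : AEStronglyMeasurable f :=
    (continuous_iff_continuousAt.2 fun x => (hf x).continuousAt).aestronglyMeasurable
  have hf_bdd : ∀ᵐ x ∂volume, ‖f x‖ ≤ C := ae_of_all _ hfC
  have hmoment : Integrable (fun x => gaussianPDFReal m v x * (x - m)) :=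
    (integrable_gaussianReal_iff hv).1 ((integrable_id_gaussianReal m v).sub (integrable_const m))
  have hibp := integral_mul_deriv_eq_deriv_mul_of_integrable (u := f) (v := gaussianPDFReal m v)
    (fun x _ => hf x) (fun x _ => hasDerivAt_gaussianPDFReal m v x) ?_ ?_ ?_
  · have hv' : (v : ℝ) ≠ 0 := by exact_mod_cast hv
    have h : ∀ x, gaussianPDFReal m v x • ((x - m) * f x)
        = -v * (f x * (-((x - m) / v) * gaussianPDFReal m v x)) := fun x => by
      rw [smul_eq_mul]; field_simp
    simp_rw [integral_gaussianReal_eq_integral_smul hv, h, integral_const_mul, hibp, smul_eq_mul,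
      mul_comm (gaussianPDFReal m v _)]
    ring
  · exact ((hmoment.const_mul (-(v : ℝ)⁻¹)).bdd_mul hf_meas hf_bdd).congr
      (ae_of_all _ fun x => by simp only [Pi.mul_apply]; ring)
  · exact ((integrable_gaussianReal_iff hv).1 hf').congr (ae_of_all _ fun x => mul_comm _ _)
  · exact (integrable_gaussianPDFReal m v).bdd_mul hf_meas hf_bdd

lemma integral_mul_tanh_gaussianReal (v : ℝ≥0) (u c : ℝ) :
    ∫ z, z * tanh (z * u + c) ∂gaussianReal 0 v
      = v * u * ∫ z, (1 - tanh (z * u + c) ^ 2) ∂gaussianReal 0 v := by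
  have hderiv : ∀ z, HasDerivAt (fun z => tanh (z * u + c)) ((1 - tanh (z * u + c) ^ 2) * u) z :=
    fun z => (hasDerivAt_tanh _).comp z
      (((hasDerivAt_id z).mul_const u).add_const c |>.congr_deriv (one_mul u))
  have hbdd : Integrable (fun z => (1 - tanh (z * u + c) ^ 2) * u) (gaussianReal 0 v) :=
    Integrable.of_bound (by fun_prop) |u| (ae_of_all _ fun z => by
      rw [norm_mul, Real.norm_eq_abs, Real.norm_eq_abs]
      exact mul_le_of_le_one_left (abs_nonneg u) (abs_one_sub_tanh_sq_le_one _))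
  have h := integral_sub_mul_eq_mul_integral_deriv_gaussianReal 0 v hderiv
    (fun z => (abs_tanh_lt_one _).le) hbdd
  simp only [sub_zero, integral_mul_const] at h
  rw [h]; ring

lemma integral_fst_mul_tanh_gaussianReal_prod (v : ℝ≥0) (ν : Measure ℝ) [IsFiniteMeasure ν]
    (u s : ℝ) :
    ∫ p, p.1 * tanh (p.1 * u + p.2 * s) ∂(gaussianReal 0 v).prod ν
      = v * u * ∫ p, (1 - tanh (p.1 * u + p.2 * s) ^ 2) ∂(gaussianReal 0 v).prod ν := by
  have hint : Integrable (fun p : ℝ × ℝ => p.1 * tanh (p.1 * u + p.2 * s))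
      ((gaussianReal 0 v).prod ν) :=
    ((integrable_id_gaussianReal 0 v).comp_fst ν).mul_bdd (by fun_prop)
      (ae_of_all _ fun p => (abs_tanh_lt_one _).le)
  have hint' : Integrable (fun p : ℝ × ℝ => 1 - tanh (p.1 * u + p.2 * s) ^ 2)
      ((gaussianReal 0 v).prod ν) :=
    Integrable.of_bound (by fun_prop) 1 (ae_of_all _ fun p => abs_one_sub_tanh_sq_le_one _)
  rw [integral_prod_symm _ hint, integral_prod_symm _ hint', ← integral_const_mul]
  simp_rw [integral_mul_tanh_gaussianReal]

lemma integral_snd_mul_tanh_prod_gaussianReal (ν : Measure ℝ) [IsFiniteMeasure ν] (w : ℝ≥0)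
    (u s : ℝ) :
    ∫ p, p.2 * tanh (p.1 * u + p.2 * s) ∂ν.prod (gaussianReal 0 w)
      = w * s * ∫ p, (1 - tanh (p.1 * u + p.2 * s) ^ 2) ∂ν.prod (gaussianReal 0 w) := by
  have h := integral_fst_mul_tanh_gaussianReal_prod w ν s u
  rw [← integral_prod_swap,
    ← integral_prod_swap (fun p : ℝ × ℝ => 1 - tanh (p.1 * s + p.2 * u) ^ 2)] at h
  simpa only [Prod.fst_swap, Prod.snd_swap, add_comm] using h

open ContinuousLinearMap in
theorem hasFDerivAt_integral_log_cosh_gaussianReal_prod (v w : ℝ≥0) (u s : ℝ) :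
    HasFDerivAt
      (fun y : ℝ × ℝ => ∫ p, log (cosh (p.1 * y.1 + p.2 * y.2))
        ∂(gaussianReal 0 v).prod (gaussianReal 0 w))
      ((1 - ∫ p, tanh (p.1 * u + p.2 * s) ^ 2 ∂(gaussianReal 0 v).prod (gaussianReal 0 w)) •
        ((v * u) • fst ℝ ℝ ℝ + (w * s) • snd ℝ ℝ ℝ)) (u, s) := by
  set P := (gaussianReal 0 v).prod (gaussianReal 0 w)
  have hℓ₁ : Integrable (fun p : ℝ × ℝ => p.1 • fst ℝ ℝ ℝ) P :=
    ((integrable_id_gaussianReal 0 v).comp_fst _).smul_const _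
  have hℓ₂ : Integrable (fun p : ℝ × ℝ => p.2 • snd ℝ ℝ ℝ) P :=
    ((integrable_id_gaussianReal 0 w).comp_snd _).smul_const _
  have hℓ : Integrable (fun p : ℝ × ℝ => p.1 • fst ℝ ℝ ℝ + p.2 • snd ℝ ℝ ℝ) P :=
    Integrable.add (ε' := ℝ × ℝ →L[ℝ] ℝ) hℓ₁ hℓ₂
  set ℓ : ℝ × ℝ → ℝ × ℝ →L[ℝ] ℝ := fun p => p.1 • fst ℝ ℝ ℝ + p.2 • snd ℝ ℝ ℝ
  have hT : Integrable (fun p : ℝ × ℝ => tanh (ℓ p (u, s)) • ℓ p) P :=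
    hℓ.bdd_smul (φ := fun p => tanh (ℓ p (u, s))) 1 (by simp [ℓ]; fun_prop)
      (ae_of_all _ fun p => (abs_tanh_lt_one _).le)
  have hsech : ∫ p, (1 - tanh (p.1 * u + p.2 * s) ^ 2) ∂P
      = 1 - ∫ p, tanh (p.1 * u + p.2 * s) ^ 2 ∂P := by
    rw [integral_sub (integrable_const 1), integral_const]
    · simp
    · exact Integrable.of_bound (by fun_prop) 1 (ae_of_all _ fun p => by
        rw [norm_pow, Real.norm_eq_abs]; exact pow_le_one₀ (abs_nonneg _) (abs_tanh_lt_one _).le)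
  refine (hasFDerivAt_integral_log_cosh hℓ (u, s)).congr_fderiv ?_
  ext
  all_goals simp only [comp_apply, integral_apply hT]
  all_goals simp only [ℓ, add_apply, smul_apply, coe_fst', coe_snd', smul_eq_mul, inl_apply,
    inr_apply, mul_one, mul_zero, add_zero, zero_add, mul_comm (tanh _)]
  · rw [integral_fst_mul_tanh_gaussianReal_prod, hsech]; ring
  · rw [integral_snd_mul_tanh_prod_gaussianReal, hsech]; ring

end ProbabilityTheory

theorem hasDerivAt_phiRS {μ a : ℝ} {q : ℝ → ℝ} {x : ℝ} (hμ : 0 < μ) (ha : 0 ≤ a)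
    (hqx : 0 < q x) (hq : DifferentiableAt ℝ q x) (hfix : q x = rsRHS μ a x (q x)) :
    HasDerivAt (phiRS μ a q) (-μ * x + μ ^ 2 * a * x * (1 - q x)) x := by
  set P := (gaussianReal 0 1).prod (gaussianReal 0 a.toNNReal)
  set H := fun y : ℝ × ℝ => ∫ p, log (cosh (p.1 * y.1 + p.2 * y.2)) ∂P
  have hphi : phiRS μ a q
      = fun y => -μ * y ^ 2 / 2 + μ * (1 - q y) ^ 2 / 4 + H (√(μ * q y), μ * y) := by
    funext y
    simp only [phiRS, H]
    congr 3
    funext p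
    ring_nf
  have hμq : 0 < μ * q x := mul_pos hμ hqx
  have hcurve : HasDerivAt (fun y => (√(μ * q y), μ * y))
      (μ * deriv q x / (2 * √(μ * q x)), μ) x :=
    ((hq.hasDerivAt.const_mul μ).sqrt hμq.ne').prodMk
      ((hasDerivAt_id x).const_mul μ |>.congr_deriv (mul_one μ))
  have hsq : ∫ p, tanh (p.1 * √(μ * q x) + p.2 * (μ * x)) ^ 2 ∂P = q x := by
    conv_rhs => rw [hfix, rsRHS]
    congr 1
    funext p
    ring_nf
  have hH := (hasFDerivAt_integral_log_cosh_gaussianReal_prod 1 a.toNNReal (√(μ * q x)) (μ * x)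
    |>.comp_hasDerivAt x hcurve)
  rw [hsq] at hH
  simp only [NNReal.coe_one, one_mul, coe_toNNReal', smul_add, add_apply, smul_apply,
    ContinuousLinearMap.coe_fst', ContinuousLinearMap.coe_snd', smul_eq_mul] at hH
  have hpoly := (((hasDerivAt_pow 2 x).const_mul (-μ)).div_const 2).add
    ((((hq.hasDerivAt.const_sub 1).pow 2).const_mul μ).div_const 4)
  rw [hphi]
  refine (hpoly.add hH).congr_deriv ?_
  rw [max_eq_left ha]
  field_simp
  ring

lemma eq_zero_or_eq_one_sub_one_div_of_neg_mul_add_eq_zero {μ a x q : ℝ} (hμ : μ ≠ 0)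
    (h : -μ * x + μ ^ 2 * a * x * (1 - q) = 0) : x = 0 ∨ q = 1 - 1 / (μ * a) := by
  have hfactor : μ * x * (μ * a * (1 - q) - 1) = 0 := by linear_combination h
  rcases mul_eq_zero.1 hfactor with hx | hq
  · exact .inl ((mul_eq_zero.1 hx).resolve_left hμ)
  · have h1q : 1 - q = 1 / (μ * a) := eq_one_div_of_mul_eq_one_right (by linear_combination hq)
    exact .inr (by linarith)

/-- Derivative formula for `φ_RS` and characterization of its critical points:
`dφ_RS/dx = -μx + μ²a x (1 - q(x))`, so any critical point satisfies
`x = 0` or `q(x) = 1 - 1/(μ a)`. -/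
theorem phiRS_critical_points
    (μ a : ℝ) (hμ : 0 < μ) (ha : 0 < a) (q : ℝ → ℝ)
    (hqdiff : Differentiable ℝ q)
    (hq : ∀ x, q x ∈ Set.Ioc (0 : ℝ) 1 ∧ q x = rsRHS μ a x (q x)) :
    ∀ x : ℝ,
      deriv (phiRS μ a q) x = -μ * x + μ ^ 2 * a * x * (1 - q x) ∧
      (deriv (phiRS μ a q) x = 0 → x = 0 ∨ q x = 1 - 1 / (μ * a)) := by
  intro x
  have hderiv := (hasDerivAt_phiRS hμ ha.le (hq x).1.1 (hqdiff x) (hq x).2).deriv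
  refine ⟨hderiv, fun hcrit => ?_⟩
  exact eq_zero_or_eq_one_sub_one_div_of_neg_mul_add_eq_zero hμ.ne' (hderiv ▸ hcrit)

end
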